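/- Let T(λ) = Σ_{k=0}^M λ^k A_k be a polynomial operator pencil in a Hilbert space with A_k bounded for k ≥ 1 and A₀ closed. Suppose λ ∈ σ_p(T) with eigenvector x, T(λ)x = 0. Then for 0 < δ small enough that B_{2δ}(λ)\{λ} ⊆ ρ(T), the contour integral Q := (1/2πi)∮_{|z|=δ} T(λ+z)^{−1} Σ_{k=0}^{M−1} (z^k/(k+1)!) T^{(k+1)}(λ) dz satisfies Qx = x. -/

import Mathlib

/-!
Taylor expansion of the bounded part of the pencil at `λ` gives
`z • ∑ₖ zᵏ/(k+1)! T^{(k+1)}(λ) = T(λ+z) - T(λ)`, so on the eigenvector `x` the integrand is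
`T(λ+z)⁻¹ (z⁻¹ T(λ+z) x) = z⁻¹ x`, whose contour integral is `2πi x`. The only analytic input is
continuity of the resolvent on the punctured disk, which follows from the second resolvent
identity and continuity of inversion in the Banach algebra of bounded operators.
-/

open Filter Topology Metric Finset

noncomputable section

theorem add_pow_succ_sub_pow_succ {K : Type*} [Field K] [CharZero K] (l z : K) (j : ℕ) :
    (l + z) ^ (j + 1) - l ^ (j + 1) = ∑ k ∈ range (j + 1), z ^ (k + 1) / ((k + 1).factorial : K) *
      (((j + 1).factorial / (j - k).factorial : ℕ) * l ^ (j - k)) := by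
  rw [add_comm l, add_pow, sum_range_succ' _ (j + 1)]
  simp only [pow_zero, one_mul, Nat.sub_zero, Nat.choose_zero_right, Nat.cast_one, mul_one,
    add_sub_cancel_right]
  refine sum_congr rfl fun k hk => ?_
  have hkj : k + 1 ≤ j + 1 := by simpa using hk
  rw [← Nat.succ_sub_succ j k, ← Nat.descFactorial_eq_div hkj,
    Nat.descFactorial_eq_factorial_mul_choose]
  have : ((k + 1).factorial : K) ≠ 0 := Nat.cast_ne_zero.mpr (Nat.factorial_ne_zero _)
  push_cast
  field_simp

theorem continuousAt_of_eventually_resolvent_identity {X 𝔸 : Type*} [TopologicalSpace X]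
    [NormedRing 𝔸] [HasSummableGeomSeries 𝔸] {R P : X → 𝔸} {x₀ : X} (hP : ContinuousAt P x₀)
    (hR : ∀ᶠ x in 𝓝 x₀, R x = R x₀ + R x₀ * (P x₀ - P x) * R x) : ContinuousAt R x₀ := by
  -- Near `x₀`, `R x = (1 - R x₀ * (P x₀ - P x))⁻¹ * R x₀`, and inversion is continuous at `1`.
  have hlim : Tendsto (fun x => 1 - R x₀ * (P x₀ - P x)) (𝓝 x₀) (𝓝 ((1 : 𝔸ˣ) : 𝔸)) := by
    have : ContinuousAt (fun x => 1 - R x₀ * (P x₀ - P x)) x₀ := by fun_prop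
    simpa using this.tendsto
  have hunit : ∀ᶠ x in 𝓝 x₀, IsUnit (1 - R x₀ * (P x₀ - P x)) :=
    hlim.eventually (Units.isOpen.mem_nhds (Units.isUnit 1))
  have hinv : Tendsto (fun x => Ring.inverse (1 - R x₀ * (P x₀ - P x)) * R x₀) (𝓝 x₀)
      (𝓝 (R x₀)) := by
    simpa using ((NormedRing.inverse_continuousAt 1).tendsto.comp hlim).mul_const (R x₀)
  refine hinv.congr' ?_
  filter_upwards [hR, hunit] with x hx hu
  rw [← Ring.inverse_mul_cancel_left _ (R x) hu, sub_mul, one_mul, sub_eq_of_eq_add hx]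

section BoundedInverse

variable {𝕜 E : Type*} [NontriviallyNormedField 𝕜] [NormedAddCommGroup E] [NormedSpace 𝕜 E]

/-- `R = (T + B)⁻¹`, where `T + B` has domain `T.domain`. -/
def IsBoundedInverseOfAdd (T : E →ₗ.[𝕜] E) (B R : E →L[𝕜] E) : Prop :=
  (∀ y, ∃ h : R y ∈ T.domain, T ⟨R y, h⟩ + B (R y) = y) ∧ ∀ u : T.domain, R (T u + B u) = u

namespace IsBoundedInverseOfAdd

variable {T : E →ₗ.[𝕜] E} {B B' R R' : E →L[𝕜] E}

theorem eq_add_mul_sub_mul (h : IsBoundedInverseOfAdd T B R)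
    (h' : IsBoundedInverseOfAdd T B' R') : R = R' + R' * (B' - B) * R := by
  ext y
  obtain ⟨hy, hTy⟩ := h.1 y
  calc R y = R' (T ⟨R y, hy⟩ + B' (R y)) := (h'.2 ⟨R y, hy⟩).symm
    _ = R' (y + (B' - B) (R y)) := by
        rw [eq_sub_of_add_eq hTy, sub_apply]
        abel_nf
    _ = (R' + R' * (B' - B) * R) y := by simp

theorem apply_sub_apply (h : IsBoundedInverseOfAdd T B R) {u : T.domain}
    (hu : T u + B' u = 0) : R ((B - B') u) = u := by
  calc R ((B - B') u) = R (T u + B u - (T u + B' u)) := by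
        rw [sub_apply]
        abel_nf
    _ = u := by rw [hu, sub_zero, h.2]

end IsBoundedInverseOfAdd

theorem continuousOn_of_isBoundedInverseOfAdd [CompleteSpace E] {X : Type*} [TopologicalSpace X]
    {s : Set X} (hs : IsOpen s) {T : E →ₗ.[𝕜] E} {B R : X → E →L[𝕜] E}
    (hB : ContinuousOn B s) (hR : ∀ x ∈ s, IsBoundedInverseOfAdd T (B x) (R x)) :
    ContinuousOn R s := by
  intro x hx
  refine (continuousAt_of_eventually_resolvent_identity (hB.continuousAt (hs.mem_nhds hx))
    ?_).continuousWithinAt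
  filter_upwards [hs.mem_nhds hx] with y hy using (hR y hy).eq_add_mul_sub_mul (hR x hx)

end BoundedInverse

theorem ContinuousLinearMap.circleIntegral_apply {E F : Type*} [NormedAddCommGroup E]
    [NormedSpace ℂ E] [NormedAddCommGroup F] [NormedSpace ℂ F] {f : ℂ → E →L[ℂ] F} {c : ℂ}
    {R : ℝ} (hf : CircleIntegrable f c R) (v : E) :
    (∮ z in C(c, R), f z) v = ∮ z in C(c, R), f z v := by
  simp only [circleIntegral, ContinuousLinearMap.intervalIntegral_apply hf.out, smul_apply]

theorem circleIntegral_apply_eq_two_pi_I_smul {E F : Type*} [NormedAddCommGroup E]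
    [NormedSpace ℂ E] [NormedAddCommGroup F] [NormedSpace ℂ F] [CompleteSpace F]
    {f : ℂ → E →L[ℂ] F} {c : ℂ} {R : ℝ} (hR : 0 < R) (hf : ContinuousOn f (sphere c R))
    {v : E} {w : F} (hfv : ∀ z ∈ sphere c R, f z v = (z - c)⁻¹ • w) :
    (∮ z in C(c, R), f z) v = (2 * Real.pi * Complex.I) • w := by
  rw [ContinuousLinearMap.circleIntegral_apply (hf.circleIntegrable hR.le),
    circleIntegral.integral_congr hR.le hfv, circleIntegral.integral_smul_const,
    circleIntegral.integral_sub_center_inv c hR.ne']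

section Pencil

variable {E : Type*} [NormedAddCommGroup E] [NormedSpace ℂ E] {M : ℕ}

/-- The bounded part `∑ⱼ w^(j+1) A j` of the pencil; `A j` is the paper's `A_{j+1}`. -/
def pencilTail (A : Fin M → E →L[ℂ] E) (w : ℂ) : E →L[ℂ] E :=
  ∑ j : Fin M, w ^ ((j : ℕ) + 1) • A j

/-- `pencilDeriv A l k` is the `(k+1)`-st derivative `T^{(k+1)}(l)` of the pencil. -/
def pencilDeriv (A : Fin M → E →L[ℂ] E) (l : ℂ) (k : ℕ) : E →L[ℂ] E :=
  ∑ j : Fin M,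
    if k ≤ (j : ℕ) then
      (((Nat.factorial ((j : ℕ) + 1) / Nat.factorial ((j : ℕ) - k) : ℕ) : ℂ)
        * l ^ ((j : ℕ) - k)) • A j
    else 0

theorem continuous_pencilTail (A : Fin M → E →L[ℂ] E) : Continuous (pencilTail A) := by
  unfold pencilTail
  fun_prop

theorem smul_sum_pencilDeriv (A : Fin M → E →L[ℂ] E) (l z : ℂ) :
    z • ∑ k ∈ range M, (z ^ k / (Nat.factorial (k + 1) : ℂ)) • pencilDeriv A l k
      = pencilTail A (l + z) - pencilTail A l := by
  simp only [pencilDeriv, pencilTail, smul_sum, smul_ite, smul_zero, smul_smul,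
    ← sum_sub_distrib, ← sub_smul]
  rw [sum_comm]
  refine sum_congr rfl fun j _ => ?_
  have hrange : (range M).filter (· ≤ (j : ℕ)) = range ((j : ℕ) + 1) := by
    ext k
    simp only [mem_filter, mem_range]
    omega
  rw [add_pow_succ_sub_pow_succ, sum_smul, ← sum_filter, hrange]
  exact sum_congr rfl fun k _ => by congr 1; ring

end Pencil

theorem stmt_14_general {H : Type*} [NormedAddCommGroup H] [InnerProductSpace ℂ H] [CompleteSpace H]
    (M : ℕ) (A0 : H →ₗ.[ℂ] H)
    (A : Fin M → (H →L[ℂ] H))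
    (l : ℂ) (x : A0.domain)
    (hx : A0 x + ∑ j : Fin M, l ^ ((j : ℕ) + 1) • A j (x : H) = 0)
    (δ : ℝ) (hδ : 0 < δ)
    (R : ℂ → (H →L[ℂ] H))
    (hres : ∀ z : ℂ, z ≠ 0 → ‖z‖ < 2 * δ →
      (∀ y : H, ∃ h : R z y ∈ A0.domain,
        A0 ⟨R z y, h⟩ + ∑ j : Fin M, (l + z) ^ ((j : ℕ) + 1) • A j (R z y) = y) ∧
      (∀ u : A0.domain,
        R z (A0 u + ∑ j : Fin M, (l + z) ^ ((j : ℕ) + 1) • A j (u : H)) = (u : H)))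
    (Dk : ℕ → (H →L[ℂ] H))
    (hDk : ∀ k : ℕ, Dk k = ∑ j : Fin M,
      if k ≤ (j : ℕ) then
        (((Nat.factorial ((j : ℕ) + 1) / Nat.factorial ((j : ℕ) - k) : ℕ) : ℂ)
          * l ^ ((j : ℕ) - k)) • A j
      else 0)
    (Q : H →L[ℂ] H)
    (hQ : Q = (2 * Real.pi * Complex.I : ℂ)⁻¹ •
      (∮ z in C(0, δ), (R z).comp
        (∑ k ∈ Finset.range M, (z ^ k / ((Nat.factorial (k + 1) : ℂ))) • Dk k))) :
    Q (x : H) = (x : H) := by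
  obtain rfl : Dk = pencilDeriv A l := funext hDk
  set U : Set ℂ := {z | z ≠ 0 ∧ ‖z‖ < 2 * δ}
  have hU : IsOpen U := isOpen_ne.inter (isOpen_lt continuous_norm continuous_const)
  have hsphere : sphere (0 : ℂ) δ ⊆ U := fun z hz => by
    rw [mem_sphere_zero_iff_norm] at hz
    exact ⟨ne_zero_of_norm_ne_zero (hz ▸ hδ.ne'), by linarith⟩
  have hinv : ∀ z ∈ U, IsBoundedInverseOfAdd A0 (pencilTail A (l + z)) (R z) := fun z hz => by
    simpa [IsBoundedInverseOfAdd, pencilTail] using hres z hz.1 hz.2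
  have hRcont : ContinuousOn R U := continuousOn_of_isBoundedInverseOfAdd hU
    ((continuous_pencilTail A).comp (continuous_const_add l)).continuousOn hinv
  have hxker : A0 x + pencilTail A l x = 0 := by simpa [pencilTail] using hx
  have hvalue : ∀ z ∈ U, ((R z).comp (∑ k ∈ range M,
      (z ^ k / (Nat.factorial (k + 1) : ℂ)) • pencilDeriv A l k)) x = z⁻¹ • (x : H) := by
    intro z hz
    rw [ContinuousLinearMap.comp_apply, (eq_inv_smul_iff₀ hz.1).2 (smul_sum_pencilDeriv A l z), smul_apply,
      map_smul, (hinv z hz).apply_sub_apply hxker]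
  rw [hQ, smul_apply, circleIntegral_apply_eq_two_pi_I_smul hδ
    ((hRcont.mono hsphere).clm_comp (by fun_prop : Continuous _).continuousOn)
    (fun z hz => by rw [sub_zero]; exact hvalue z (hsphere hz)),
    inv_smul_smul₀ Complex.two_pi_I_ne_zero]

/-- Let `T(λ) = Σ_{k=0}^M λ^k A_k` be a polynomial operator pencil in a
Hilbert space, with `A₀` closed (possibly unbounded) and `A₁, …, A_M` bounded.  Suppose
`λ ∈ σ_p(T)` with eigenvector `x`, so `T(λ)x = 0`, and let `δ > 0` be small enough that the
punctured disk `B_{2δ}(λ) \ {λ}` lies in `ρ(T)`, with resolvents `R z = T(λ+z)⁻¹`.  Then the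
contour integral
`Q = (1/2πi) ∮_{|z|=δ} T(λ+z)⁻¹ Σ_{k=0}^{M−1} (z^k/(k+1)!) T^{(k+1)}(λ) dz`
satisfies `Q x = x`.  Here `T^{(k+1)}(λ) = Σ_{j≥k} ((j+1)!/(j−k)!) λ^{j−k} A_{j+1}` (bounded,
since only the bounded coefficients survive differentiation). -/
theorem stmt_14 {H : Type*} [NormedAddCommGroup H] [InnerProductSpace ℂ H] [CompleteSpace H]
    (M : ℕ) (A0 : H →ₗ.[ℂ] H)
    (hA0closed : IsClosed (A0.graph : Set (H × H)))
    (hA0dense : Dense (A0.domain : Set H))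
    (A : Fin M → (H →L[ℂ] H))
    (l : ℂ) (x : A0.domain) (hx0 : (x : H) ≠ 0)
    (hx : A0 x + ∑ j : Fin M, l ^ ((j : ℕ) + 1) • A j (x : H) = 0)
    (δ : ℝ) (hδ : 0 < δ)
    (R : ℂ → (H →L[ℂ] H))
    (hres : ∀ z : ℂ, z ≠ 0 → ‖z‖ < 2 * δ →
      (∀ y : H, ∃ h : R z y ∈ A0.domain,
        A0 ⟨R z y, h⟩ + ∑ j : Fin M, (l + z) ^ ((j : ℕ) + 1) • A j (R z y) = y) ∧
      (∀ u : A0.domain,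
        R z (A0 u + ∑ j : Fin M, (l + z) ^ ((j : ℕ) + 1) • A j (u : H)) = (u : H)))
    (Dk : ℕ → (H →L[ℂ] H))
    (hDk : ∀ k : ℕ, Dk k = ∑ j : Fin M,
      if k ≤ (j : ℕ) then
        (((Nat.factorial ((j : ℕ) + 1) / Nat.factorial ((j : ℕ) - k) : ℕ) : ℂ)
          * l ^ ((j : ℕ) - k)) • A j
      else 0)
    (Q : H →L[ℂ] H)
    (hQ : Q = (2 * Real.pi * Complex.I : ℂ)⁻¹ •
      (∮ z in C(0, δ), (R z).comp
        (∑ k ∈ Finset.range M, (z ^ k / ((Nat.factorial (k + 1) : ℂ))) • Dk k))) :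
    Q (x : H) = (x : H) :=
  stmt_14_general M A0 A l x hx δ hδ R hres Dk hDk Q hQ

end
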